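/- arXiv:math/0201159 — 3 statements merged into one kernel-verified Lean document; each statement's English description precedes it below -/
import Mathlib

section
/- Let ν : ℍ × ℍ → ℍ be defined by ν(q,w) = (1/2)·q·i·(star q) + (λ/2)·(w − star w), where λ ∈ ℝ. Then ν is invariant under the one-parameter group action (q,w) ↦ (q·exp(t•i), w + (λ·t)·1): for all q, w ∈ ℍ and all t, λ ∈ ℝ, (1/2)·(q·exp(t•i))·i·star(q·exp(t•i)) + (λ/2)·((w + (λ*t)·1) − star(w + (λ*t)·1)) = (1/2)·q·i·(star q) + (λ/2)·(w − star w). -/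
open Quaternion

/-- The imaginary unit quaternion `i`. -/
noncomputable def qi : Quaternion ℝ := ⟨0, 1, 0, 0⟩

/-- The moment map `ν(q,w) = (1/2)·q·i·(star q) + (λ/2)·(w − star w)` is invariant under
the one-parameter action `(q,w) ↦ (q·exp(t•i), w + (λ·t)·1)`. -/
theorem momentMap_invariant (q w : Quaternion ℝ) (t lam : ℝ) :
    ((1 : ℝ)/2) • ((q * NormedSpace.exp (t • qi)) * qi *
        star (q * NormedSpace.exp (t • qi))) +
      (lam/2) • ((w + ((lam * t : ℝ) : Quaternion ℝ)) -
        star (w + ((lam * t : ℝ) : Quaternion ℝ))) =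
    ((1 : ℝ)/2) • (q * qi * star q) + (lam/2) • (w - star w) := by
  set e := NormedSpace.exp (t • qi) with he
  have hstar_qi : star qi = -qi := by
    ext <;> simp [Quaternion.re_star, Quaternion.imI_star, Quaternion.imJ_star, Quaternion.imK_star] <;> simp [qi]
  have hcomm : qi * e = e * qi :=
    (((Commute.refl qi).smul_right t).exp_right).eq
  have hse : star e = NormedSpace.exp (-(t • qi)) := by
    rw [he, NormedSpace.star_exp, Quaternion.star_smul, hstar_qi, smul_neg]
  have hmul : e * star e = 1 := by
    rw [hse, he, ← NormedSpace.exp_add_of_commute_of_mem_ball (𝕂 := ℝ) ((Commute.refl _).neg_right)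
    ((NormedSpace.expSeries_radius_eq_top ℝ (Quaternion ℝ)).symm ▸ edist_lt_top _ _)
    ((NormedSpace.expSeries_radius_eq_top ℝ (Quaternion ℝ)).symm ▸ edist_lt_top _ _),
      add_neg_cancel, NormedSpace.exp_zero]
  have h1 : (q * e) * qi * star (q * e) = q * qi * star q := by
    rw [star_mul]
    calc q * e * qi * (star e * star q) = q * (qi * e) * (star e * star q) := by
          rw [hcomm]; noncomm_ring
      _ = q * qi * (e * star e) * star q := by noncomm_ring
      _ = q * qi * star q := by rw [hmul, mul_one]
  have h2 : (w + ((lam * t : ℝ) : Quaternion ℝ)) -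
      star (w + ((lam * t : ℝ) : Quaternion ℝ)) = w - star w := by
    simp only [star_add, Quaternion.star_coe, ← Quaternion.coe_mul, mul_comm t lam]
    abel
  rw [h1, h2]
end

section
/- For all real numbers r > 0, λ ≠ 0, h, R, Y, T, setting c = 1/r + 1/λ², a = 1 + h/λ², and μ = Y + T/(2·λ·c), one has the identity (1/4)·(h/r² + 1/λ²)·R² + a·Y² + (h/λ)·Y·T + (h/4)·T² = a·μ² + (1/λ)·(h − a/c)·T·μ + ((h/r² + 1/λ²)/c)·((c/4)·R² + (1/(4c))·T²). -/
/-- The quadratic-form identity encoding the HKT reduction of `ds²_h` over the Taub-NUT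
metric: the restriction of the metric to the zero level set decomposes into a vertical part,
a cross term, and a conformal multiple of the Taub-NUT metric. -/
theorem taubNUT_hkt_reduction_identity (r lam h R Y T : ℝ) (hr : 0 < r) (hlam : lam ≠ 0) :
    let c := 1/r + 1/lam^2
    let a := 1 + h/lam^2
    let mu := Y + T/(2*lam*c)
    (1/4)*(h/r^2 + 1/lam^2)*R^2 + a*Y^2 + (h/lam)*Y*T + (h/4)*T^2 =
      a*mu^2 + (1/lam)*(h - a/c)*T*mu
        + ((h/r^2 + 1/lam^2)/c)*((c/4)*R^2 + (1/(4*c))*T^2) := by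
  intro c a mu
  have hr' : r ≠ 0 := hr.ne'
  have hc : c ≠ 0 := by
    have : 0 < c := by positivity
    exact this.ne'
  show _ = _
  simp only [c, a, mu] at *
  field_simp
  ring
end

section
/- Let m ∈ ℕ, let Λ : Matrix (Fin m) (Fin m) ℝ be a real m×m matrix, and define ν : (Fin m → ℍ) × (Fin m → ℍ) → (Fin m → ℍ) by ν_a(q,w) = (1/2)·(q a)·i·star(q a) + (1/2)·∑_b Λ a b · ((w b) − star (w b)). Then ν is invariant under the ℝ^m-action q_a ↦ (q a)·exp((t a)•i), w_a ↦ (w a) + (∑_b Λ a b * t b)·1: for all q, w : Fin m → ℍ, all t : Fin m → ℝ, and all a, ν_a of the transformed pair equals ν_a(q,w). -/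
open Quaternion

/-- The Lee–Weinberg–Yi moment map
`ν_a(q,w) = (1/2)·q_a·i·(star q_a) + (1/2)·∑_b Λ a b · (w_b − star w_b)`
is invariant under the `ℝ^m`-action
`q_a ↦ q_a·exp((t a)•i)`, `w_a ↦ w_a + (∑_b Λ a b * t b)·1`. -/
theorem lwy_momentMap_invariant (m : ℕ) (Λ : Matrix (Fin m) (Fin m) ℝ)
    (q w : Fin m → Quaternion ℝ) (t : Fin m → ℝ) (a : Fin m) :
    ((1 : ℝ)/2) • ((q a * NormedSpace.exp ((t a) • qi)) * qi *
        star (q a * NormedSpace.exp ((t a) • qi))) +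
      ((1 : ℝ)/2) • (∑ b, Λ a b •
        ((w b + ((∑ c, Λ b c * t c : ℝ) : Quaternion ℝ)) -
          star (w b + ((∑ c, Λ b c * t c : ℝ) : Quaternion ℝ)))) =
    ((1 : ℝ)/2) • (q a * qi * star (q a)) +
      ((1 : ℝ)/2) • (∑ b, Λ a b • (w b - star (w b))) := by
  have hstar_qi : star qi = -qi := by
    ext <;> simp <;> simp [qi]
  set x : Quaternion ℝ := (t a) • qi with hx
  set e := NormedSpace.exp x with he
  have hse : star e = NormedSpace.exp (-x) := by
    rw [he, NormedSpace.star_exp, hx, Quaternion.star_smul, hstar_qi, smul_neg]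
  have hmul : e * star e = 1 := by
    rw [hse, he, ← NormedSpace.exp_add_of_commute_of_mem_ball (𝕂 := ℝ) (Commute.neg_right (Commute.refl x))
        ((NormedSpace.expSeries_radius_eq_top ℝ ℍ).symm ▸ edist_lt_top _ _)
        ((NormedSpace.expSeries_radius_eq_top ℝ ℍ).symm ▸ edist_lt_top _ _),
      add_neg_cancel, NormedSpace.exp_zero]
  have hcomm : e * qi = qi * e := by
    exact (((Commute.refl qi).smul_right (t a)).exp_right).eq.symm
  have key : q a * e * qi * star (q a * e) = q a * qi * star (q a) := by
    rw [star_mul]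
    calc q a * e * qi * (star e * star (q a))
        = q a * (e * qi * star e) * star (q a) := by noncomm_ring
      _ = q a * (qi * (e * star e)) * star (q a) := by rw [hcomm]; noncomm_ring
      _ = q a * qi * star (q a) := by rw [hmul, mul_one, mul_assoc]
  rw [key]
  congr 1
  congr 1
  apply Finset.sum_congr rfl
  intro b _
  congr 1
  simp [star_add]
end
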